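/- Let s = σ + it be a complex number with σ > 0, s ≠ 1, and let x > 0 be a real number. Then ζ(s) = ∑_{1 ≤ n ≤ x} n^{−s} + x^{1−s}/(s−1) + ({x} − 1/2)·x^{−s} + s·∫_x^∞ (1/2 − {u})·u^{−s−1} du, where {y} denotes the fractional part of y. -/

import Mathlib

open Complex Real
open MeasureTheory Set Metric

noncomputable section

lemma contOn_cpow (a : ℂ) {x : ℝ} (hx : 0 < x) :
    ContinuousOn (fun u : ℝ => (u : ℂ) ^ a) (Ioi x) := by
  apply ContinuousOn.cpow_const Complex.continuous_ofReal.continuousOn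
  intro u hu
  exact Or.inl (by simpa using hx.trans hu)

lemma aesm_aux (a : ℂ) {x : ℝ} (hx : 0 < x) :
    AEStronglyMeasurable (fun u : ℝ => ((1 / 2 - Int.fract u : ℝ) : ℂ) * (u : ℂ) ^ a)
      (volume.restrict (Ioi x)) := by
  refine AEStronglyMeasurable.mul ?_ ((contOn_cpow a hx).aestronglyMeasurable measurableSet_Ioi)
  exact (Complex.measurable_ofReal.comp (measurable_const.sub measurable_fract)).aestronglyMeasurable

lemma norm_cpow_real {u : ℝ} (hu : 0 < u) (a : ℂ) : ‖(u : ℂ) ^ a‖ = u ^ a.re := by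
  rw [Complex.norm_cpow_eq_rpow_re_of_pos hu]

lemma fract_bound (u : ℝ) : |1 / 2 - Int.fract u| ≤ 1 := by
  have h1 := Int.fract_nonneg u
  have h2 := Int.fract_lt_one u
  rw [abs_le]; constructor <;> linarith

-- |log u| ≤ |log x| + u ^ δ / δ on Ioi x
lemma integral_cpow_Ioi_eq {s : ℂ} (hs : 0 < s.re) {c : ℝ} (hc : 0 < c) :
    (∫ u in Ioi c, (u : ℂ) ^ (-s - 1)) = (c : ℂ) ^ (-s) / s := by
  have hre : (-s - 1).re < -1 := by simp; linarith
  rw [integral_Ioi_cpow_of_lt hre hc]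
  have h1 : -s - 1 + 1 = -s := by ring
  rw [h1]
  have hs0 : s ≠ 0 := fun h => by simp [h] at hs
  field_simp

lemma integral_cpow_Ioi_eq' {s : ℂ} (hs : 1 < s.re) {c : ℝ} (hc : 0 < c) :
    (∫ u in Ioi c, (u : ℂ) ^ (-s)) = (c : ℂ) ^ (1 - s) / (s - 1) := by
  have hre : (-s).re < -1 := by simp; linarith
  rw [integral_Ioi_cpow_of_lt hre hc]
  have h1 : -s + 1 = 1 - s := by ring
  rw [h1]
  have hs0 : s - 1 ≠ 0 := by
    intro h; rw [sub_eq_zero] at h; subst h; simp at hs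
  have h2 : (1 : ℂ) - s ≠ 0 := by
    intro h; apply hs0; rw [sub_eq_zero] at h ⊢; exact h.symm
  rw [div_eq_div_iff h2 hs0]
  ring

lemma log_bound {x δ : ℝ} (hx : 0 < x) (hδ : 0 < δ) {u : ℝ} (hu : x < u) :
    |Real.log u| ≤ |Real.log x| + u ^ δ / δ := by
  have hu0 : 0 < u := hx.trans hu
  rcases le_or_gt 1 u with h1 | h1
  · have h2 : 0 ≤ Real.log u := Real.log_nonneg h1
    rw [_root_.abs_of_nonneg h2]
    have := Real.log_le_rpow_div (le_trans (by norm_num) h1 : (0:ℝ) ≤ u) hδ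
    have h3 : (0:ℝ) ≤ |Real.log x| := abs_nonneg _
    linarith
  · have h2 : Real.log u < 0 := Real.log_neg (hx.trans hu) h1
    rw [_root_.abs_of_nonpos h2.le]
    have h3 : Real.log x ≤ Real.log u := Real.log_le_log hx hu.le
    have h4 : -Real.log u ≤ -Real.log x := by linarith
    have h5 : -Real.log x ≤ |Real.log x| := neg_le_abs _
    have h6 : 0 ≤ u ^ δ / δ := by positivity
    linarith

-- integrability of |log u| * u ^ a on Ioi x, for a < -1
lemma int_log_rpow {a : ℝ} (ha : a < -1) {x : ℝ} (hx : 0 < x) :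
    IntegrableOn (fun u : ℝ => |Real.log u| * u ^ a) (Ioi x) := by
  set δ : ℝ := (-1 - a) / 2 with hδdef
  have hδ : 0 < δ := by rw [hδdef]; linarith
  have hlt : a + δ < -1 := by rw [hδdef]; linarith
  have hg : IntegrableOn (fun u : ℝ => |Real.log x| * u ^ a + (1 / δ) * u ^ (a + δ)) (Ioi x) :=
    ((integrableOn_Ioi_rpow_of_lt ha hx).const_mul _).add
      ((integrableOn_Ioi_rpow_of_lt hlt hx).const_mul _)
  refine Integrable.mono' hg ?_ ?_
  · apply Measurable.aestronglyMeasurable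
    exact (Real.measurable_log.abs).mul (measurable_id.pow_const a)
  · filter_upwards [ae_restrict_mem measurableSet_Ioi] with u hu
    have hu0 : 0 < u := hx.trans hu
    rw [Real.norm_eq_abs, abs_mul, _root_.abs_abs, _root_.abs_of_nonneg (Real.rpow_nonneg hu0.le a)]
    calc |Real.log u| * u ^ a ≤ (|Real.log x| + u ^ δ / δ) * u ^ a := by
          apply mul_le_mul_of_nonneg_right (log_bound hx hδ hu) (Real.rpow_nonneg hu0.le a)
      _ = |Real.log x| * u ^ a + (1 / δ) * (u ^ δ * u ^ a) := by ring
      _ = |Real.log x| * u ^ a + (1 / δ) * u ^ (a + δ) := by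
          rw [← Real.rpow_add hu0, add_comm δ a]

lemma int_aux {a : ℂ} (ha : a.re < -1) {x : ℝ} (hx : 0 < x) :
    IntegrableOn (fun u : ℝ => ((1 / 2 - Int.fract u : ℝ) : ℂ) * (u : ℂ) ^ a) (Ioi x) := by
  refine Integrable.mono' ((integrableOn_Ioi_rpow_of_lt ha hx)) (aesm_aux a hx) ?_
  filter_upwards [ae_restrict_mem measurableSet_Ioi] with u hu
  have hu0 : 0 < u := hx.trans hu
  rw [norm_mul, norm_cpow_real hu0]
  calc ‖(((1:ℝ) / 2 - Int.fract u : ℝ) : ℂ)‖ * u ^ a.re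
      ≤ 1 * u ^ a.re := by
        apply mul_le_mul_of_nonneg_right _ (Real.rpow_nonneg hu0.le _)
        rw [Complex.norm_real]; exact fract_bound u
    _ = u ^ a.re := one_mul _

lemma diff_I {x : ℝ} (hx : 0 < x) {s₀ : ℂ} (hs₀ : 0 < s₀.re) :
    DifferentiableAt ℂ
      (fun s : ℂ => ∫ u in Ioi x, ((1 / 2 - Int.fract u : ℝ) : ℂ) * (u : ℂ) ^ (-s - 1)) s₀ := by
  set σ := s₀.re with hσ
  set a : ℝ := -σ / 2 - 1 with hadef
  set b : ℝ := -(3 * σ / 2) - 1 with hbdef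
  have ha : a < -1 := by rw [hadef]; linarith
  have hb : b < -1 := by rw [hbdef]; linarith
  set bound : ℝ → ℝ := fun u => |Real.log u| * u ^ a + |Real.log u| * u ^ b with hbound
  set F' : ℂ → ℝ → ℂ := fun s u =>
    ((1 / 2 - Int.fract u : ℝ) : ℂ) * (-(Complex.log (u : ℂ)) * (u : ℂ) ^ (-s - 1)) with hF'
  have hmain := hasDerivAt_integral_of_dominated_loc_of_deriv_le
    (μ := volume.restrict (Ioi x)) (x₀ := s₀)
    (F := fun s u => ((1 / 2 - Int.fract u : ℝ) : ℂ) * (u : ℂ) ^ (-s - 1)) (F' := F')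
    (bound := bound) (ball_mem_nhds s₀ (half_pos hs₀ : 0 < σ / 2))
    (Filter.Eventually.of_forall fun s => aesm_aux (-s - 1) hx)
    (int_aux (by simp; linarith) hx)
    ?meas ?bdd ?bint ?deriv
  · exact hmain.2.differentiableAt
  case meas =>
    refine AEStronglyMeasurable.mul
      ((Complex.measurable_ofReal.comp (measurable_const.sub measurable_fract)).aestronglyMeasurable) ?_
    refine ContinuousOn.aestronglyMeasurable ?_ measurableSet_Ioi
    refine ContinuousOn.mul (ContinuousOn.neg ?_) (contOn_cpow _ hx)
    intro u hu
    have hu0 : 0 < u := hx.trans hu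
    exact ((continuousAt_clog (by simp [hu0] : (u:ℂ) ∈ Complex.slitPlane)).comp
      (Complex.continuous_ofReal.continuousAt)).continuousWithinAt
  case bdd =>
    filter_upwards [ae_restrict_mem measurableSet_Ioi] with u hu
    intro s hsb
    have hu0 : 0 < u := hx.trans hu
    have hre : |s.re - σ| < σ / 2 := by
      calc |s.re - σ| = |(s - s₀).re| := by rw [Complex.sub_re]
        _ ≤ ‖s - s₀‖ := Complex.abs_re_le_norm _
        _ < σ / 2 := by rwa [mem_ball, Complex.dist_eq] at hsb
    have hre1 : σ / 2 < s.re := by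
      have := abs_lt.1 hre; linarith [this.1]
    have hre2 : s.re < 3 * σ / 2 := by
      have := abs_lt.1 hre; linarith [this.2]
    have hlog : ‖Complex.log (u : ℂ)‖ = |Real.log u| := by
      rw [← Complex.ofReal_log hu0.le, Complex.norm_real, Real.norm_eq_abs]
    rw [hF']
    simp only
    rw [norm_mul, norm_mul, norm_neg, hlog, norm_cpow_real hu0]
    have hexp : u ^ ((-s - 1).re) ≤ u ^ a + u ^ b := by
      have hres : (-s - 1).re = -s.re - 1 := by simp
      rcases le_or_gt 1 u with h1 | h1
      · have : u ^ ((-s - 1).re) ≤ u ^ a := by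
          apply Real.rpow_le_rpow_of_exponent_le h1
          rw [hres, hadef]; linarith
        have h2 : (0:ℝ) ≤ u ^ b := Real.rpow_nonneg hu0.le _
        linarith
      · have : u ^ ((-s - 1).re) ≤ u ^ b := by
          apply Real.rpow_le_rpow_of_exponent_ge hu0 h1.le
          rw [hres, hbdef]; linarith
        have h2 : (0:ℝ) ≤ u ^ a := Real.rpow_nonneg hu0.le _
        linarith
    calc ‖(((1:ℝ) / 2 - Int.fract u : ℝ) : ℂ)‖ * (|Real.log u| * u ^ ((-s - 1).re))
        ≤ 1 * (|Real.log u| * (u ^ a + u ^ b)) := by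
          apply mul_le_mul
          · rw [Complex.norm_real]; exact fract_bound u
          · apply mul_le_mul_of_nonneg_left hexp (abs_nonneg _)
          · positivity
          · norm_num
      _ = bound u := by rw [hbound]; ring
  case bint =>
    exact (int_log_rpow ha hx).add (int_log_rpow hb hx)
  case deriv =>
    filter_upwards [ae_restrict_mem measurableSet_Ioi] with u hu
    intro s hsb
    have hu0 : 0 < u := hx.trans hu
    have hue : (u : ℂ) ≠ 0 := by exact_mod_cast hu0.ne'
    have hrw : ∀ w : ℂ, (u : ℂ) ^ (-w - 1) = Complex.exp (Complex.log (u : ℂ) * (-w - 1)) :=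
      fun w => Complex.cpow_def_of_ne_zero hue _
    have h1 : HasDerivAt (fun w : ℂ => Complex.log (u : ℂ) * (-w - 1)) (-Complex.log (u : ℂ)) s := by
      simpa using ((hasDerivAt_id s).neg.sub_const (1:ℂ)).const_mul (Complex.log (u : ℂ))
    have h2 := h1.cexp
    have h3 := h2.const_mul (((1 : ℝ) / 2 - Int.fract u : ℝ) : ℂ)
    have heq : (fun w : ℂ => (((1:ℝ) / 2 - Int.fract u : ℝ) : ℂ) * Complex.exp (Complex.log (u : ℂ) * (-w - 1)))
        = fun w : ℂ => (((1:ℝ) / 2 - Int.fract u : ℝ) : ℂ) * (u : ℂ) ^ (-w - 1) := by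
      funext w; rw [hrw]
    rw [heq] at h3
    refine h3.congr_deriv ?_
    rw [hF']
    simp only
    rw [hrw]
    ring

lemma key1 (s : ℂ) (hs : 1 < s.re) (x : ℝ) (hx : 0 < x) :
    riemannZeta s =
      (∑ n ∈ Finset.Icc 1 ⌊x⌋₊, (n : ℂ) ^ (-s)) +
        (x : ℂ) ^ (1 - s) / (s - 1) +
        ((Int.fract x : ℝ) - 1 / 2) * (x : ℂ) ^ (-s) +
        s * ∫ u in Set.Ioi x, ((1 / 2 - Int.fract u : ℝ) : ℂ) * (u : ℂ) ^ (-s - 1) := by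
  have hs0 : s ≠ 0 := by intro h; rw [h] at hs; norm_num at hs
  have hs1 : s - 1 ≠ 0 := by
    intro h; rw [sub_eq_zero] at h; subst h; simp at hs
  have hsre : 0 < s.re := by linarith
  set N : ℕ := ⌊x⌋₊ + 1 with hN
  have hxN : x < (N : ℝ) := by rw [hN]; push_cast; exact Nat.lt_floor_add_one x
  have hN0 : 0 < (N : ℝ) := lt_trans hx hxN
  -- the summand
  have hsum : Summable (fun n : ℕ => 1 / (n : ℂ) ^ s) := Complex.summable_one_div_nat_cpow.2 hs
  have hzeta : riemannZeta s = ∑' n : ℕ, 1 / (n : ℂ) ^ s := zeta_eq_tsum_one_div_nat_cpow hs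
  -- split head and tail
  have hsplit : (∑ n ∈ Finset.range N, 1 / (n : ℂ) ^ s) + (∑' k : ℕ, 1 / ((k + N : ℕ) : ℂ) ^ s)
      = ∑' n : ℕ, 1 / (n : ℂ) ^ s := by
    simpa using Summable.sum_add_tsum_nat_add N hsum
  -- head
  have hhead : (∑ n ∈ Finset.range N, 1 / (n : ℂ) ^ s)
      = ∑ n ∈ Finset.Icc 1 ⌊x⌋₊, (n : ℂ) ^ (-s) := by
    rw [Finset.range_eq_Ico, Finset.sum_eq_sum_Ico_succ_bot (Nat.succ_pos _)]
    simp only [Nat.cast_zero, Complex.zero_cpow hs0, div_zero, zero_add]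
    refine Finset.sum_congr (by ext a; simp [hN, Nat.lt_succ_iff]) fun n hn => ?_
    rw [Complex.cpow_neg, one_div]
  -- tail: each term as an integral
  set g : ℕ → ℝ → ℂ := fun k => Set.indicator (Ioi ((k + N : ℕ) : ℝ)) (fun u => s * (u : ℂ) ^ (-s - 1)) with hg
  have hck : ∀ k : ℕ, (0:ℝ) < ((k + N : ℕ) : ℝ) := by
    intro k; push_cast; positivity
  have hxk : ∀ k : ℕ, x ≤ ((k + N : ℕ) : ℝ) := by
    intro k; push_cast; have := hxN; push_cast at this; linarith [Nat.cast_nonneg (α := ℝ) k]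
  have hre1 : (-s - 1).re < -1 := by simp; linarith
  have hIk : ∀ k : ℕ, IntegrableOn (fun u : ℝ => s * (u : ℂ) ^ (-s - 1)) (Ioi ((k + N : ℕ) : ℝ)) :=
    fun k => (integrableOn_Ioi_cpow_of_lt hre1 (hck k)).const_mul s
  have hgind : ∀ k : ℕ, ∫ u in Ioi x, g k u = ∫ u in Ioi ((k + N : ℕ) : ℝ), s * (u : ℂ) ^ (-s - 1) := by
    intro k
    rw [hg, setIntegral_indicator measurableSet_Ioi, Set.Ioi_inter_Ioi, max_eq_right (hxk k)]
  have hval : ∀ k : ℕ, ∫ u in Ioi x, g k u = 1 / ((k + N : ℕ) : ℂ) ^ s := by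
    intro k
    rw [hgind k, MeasureTheory.integral_const_mul, integral_cpow_Ioi_eq hsre (hck k),
      mul_div_cancel₀ _ hs0, Complex.cpow_neg, one_div]
    norm_cast
  -- summability of integral norms
  have hnorm : ∀ k : ℕ, (∫ u in Ioi x, ‖g k u‖) = ‖s‖ * (((k + N : ℕ) : ℝ) ^ (-s.re) / s.re) := by
    intro k
    have h1 : (fun u => ‖g k u‖) = Set.indicator (Ioi ((k + N : ℕ) : ℝ))
        (fun u => ‖s * (u : ℂ) ^ (-s - 1)‖) := by
      funext u; rw [hg]; exact norm_indicator_eq_indicator_norm _ u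
    rw [h1, setIntegral_indicator measurableSet_Ioi, Set.Ioi_inter_Ioi, max_eq_right (hxk k)]
    have h2 : ∀ u ∈ Ioi ((k + N : ℕ) : ℝ), ‖s * (u : ℂ) ^ (-s - 1)‖ = ‖s‖ * u ^ (-s.re - 1) := by
      intro u hu
      rw [norm_mul, norm_cpow_real ((hck k).trans hu)]
      congr 1
    rw [setIntegral_congr_fun measurableSet_Ioi h2, MeasureTheory.integral_const_mul,
      integral_Ioi_rpow_of_lt (by linarith) (hck k)]
    congr 1
    have h3 : -s.re - 1 + 1 = -s.re := by ring
    rw [h3]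
    field_simp
  have hsummable : Summable fun k : ℕ => ∫ u in Ioi x, ‖g k u‖ := by
    simp_rw [hnorm]
    apply Summable.mul_left
    apply Summable.div_const
    have h4 : Summable (fun n : ℕ => (n : ℝ) ^ (-s.re)) := Real.summable_nat_rpow.2 (by linarith)
    exact h4.comp_injective (add_left_injective N)
  have hgint : ∀ k : ℕ, Integrable (g k) (volume.restrict (Ioi x)) := by
    intro k
    rw [hg]
    exact ((hIk k).integrable_indicator measurableSet_Ioi).integrableOn
  -- swap sum and integral
  have hswap : (∑' k : ℕ, 1 / ((k + N : ℕ) : ℂ) ^ s) = ∫ u in Ioi x, ∑' k : ℕ, g k u := by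
    rw [← integral_tsum_of_summable_integral_norm hgint hsummable]
    exact tsum_congr fun k => (hval k).symm
  -- a.e. pointwise evaluation of the inner sum
  have hae : ∀ᵐ u ∂(volume.restrict (Ioi x)),
      (∑' k : ℕ, g k u) = s * (u : ℂ) ^ (-s) + s * (((1 / 2 - Int.fract u : ℝ) : ℂ) * (u : ℂ) ^ (-s - 1))
        + (s * (1 / 2 - (N : ℂ))) * (u : ℂ) ^ (-s - 1) := by
    have hZ : ∀ᵐ u : ℝ ∂volume, u ∉ Set.range (Int.cast : ℤ → ℝ) := by
      have : volume (Set.range (Int.cast : ℤ → ℝ)) = 0 :=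
        Set.Countable.measure_zero (Set.countable_range _) _
      exact (MeasureTheory.measure_eq_zero_iff_ae_notMem).1 this
    filter_upwards [ae_restrict_of_ae hZ, ae_restrict_mem measurableSet_Ioi] with u hunotint hux
    have hu0 : 0 < u := hx.trans hux
    have hfl : ⌊x⌋₊ ≤ ⌊u⌋₊ := Nat.floor_le_floor (le_of_lt hux)
    set m : ℕ := ⌊u⌋₊ + 1 - N with hm
    have hmem : ∀ k : ℕ, ((k + N : ℕ) : ℝ) < u ↔ k ∈ Finset.range m := by
      intro k
      rw [Finset.mem_range, hm]
      constructor
      · intro h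
        have : k + N ≤ ⌊u⌋₊ := Nat.le_floor (le_of_lt h)
        omega
      · intro h
        have h2 : k + N ≤ ⌊u⌋₊ := by omega
        have h3 : ((k + N : ℕ) : ℝ) ≤ (⌊u⌋₊ : ℝ) := Nat.cast_le.2 h2
        have h4 : (⌊u⌋₊ : ℝ) ≤ u := Nat.floor_le hu0.le
        rcases lt_or_eq_of_le (h3.trans h4) with h5 | h5
        · exact h5
        · exfalso
          apply hunotint
          refine ⟨((k + N : ℕ) : ℤ), ?_⟩
          push_cast at h5 ⊢
          linarith
    have hts : (∑' k : ℕ, g k u) = ∑ k ∈ Finset.range m, g k u := by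
      apply tsum_eq_sum
      intro k hk
      rw [hg]
      apply Set.indicator_of_notMem
      rw [Set.mem_Ioi]
      intro h; exact hk ((hmem k).1 h)
    rw [hts]
    have hgval : ∀ k ∈ Finset.range m, g k u = s * (u : ℂ) ^ (-s - 1) := by
      intro k hk
      rw [hg]
      exact Set.indicator_of_mem (Set.mem_Ioi.2 ((hmem k).2 hk)) _
    rw [Finset.sum_congr rfl hgval, Finset.sum_const, Finset.card_range, nsmul_eq_mul]
    -- now cast m
    have hmcast : ((m : ℝ)) = u - Int.fract u + 1 - N := by
      rw [hm, Nat.cast_sub (by omega)]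
      push_cast
      have : ((⌊u⌋₊ : ℝ)) = (⌊u⌋ : ℝ) := by
        rw [← Int.natCast_floor_eq_floor hu0.le]; push_cast; ring
      rw [this, Int.self_sub_fract u]
    have hmc : ((m : ℂ)) = (u : ℂ) - ((Int.fract u : ℝ) : ℂ) + 1 - (N : ℂ) := by
      have := congrArg (fun r : ℝ => (r : ℂ)) hmcast
      push_cast at this ⊢
      exact this
    have hune : (u : ℂ) ≠ 0 := by exact_mod_cast hu0.ne'
    have hupow : (u : ℂ) * (u : ℂ) ^ (-s - 1) = (u : ℂ) ^ (-s) := by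
      rw [Complex.cpow_sub _ _ hune, Complex.cpow_one, Complex.cpow_neg]
      rw [mul_comm, div_mul_cancel₀ _ hune]
    rw [hmc, ← hupow]
    push_cast
    ring
  -- integrate the three pieces
  have hintA : IntegrableOn (fun u : ℝ => s * (u : ℂ) ^ (-s)) (Ioi x) :=
    (integrableOn_Ioi_cpow_of_lt (by simp; linarith) hx).const_mul s
  have hintB : IntegrableOn (fun u : ℝ => s * (((1 / 2 - Int.fract u : ℝ) : ℂ) * (u : ℂ) ^ (-s - 1))) (Ioi x) :=
    (int_aux hre1 hx).const_mul s
  have hintC : IntegrableOn (fun u : ℝ => (s * (1 / 2 - (N : ℂ))) * (u : ℂ) ^ (-s - 1)) (Ioi x) :=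
    (integrableOn_Ioi_cpow_of_lt hre1 hx).const_mul _
  have htail : (∑' k : ℕ, 1 / ((k + N : ℕ) : ℂ) ^ s)
      = s * ((x : ℂ) ^ (1 - s) / (s - 1))
        + s * (∫ u in Ioi x, ((1 / 2 - Int.fract u : ℝ) : ℂ) * (u : ℂ) ^ (-s - 1))
        + (s * (1 / 2 - (N : ℂ))) * ((x : ℂ) ^ (-s) / s) := by
    rw [hswap, integral_congr_ae hae]
    have e1 : (∫ u in Ioi x, (s * (u : ℂ) ^ (-s) + s * (((1 / 2 - Int.fract u : ℝ) : ℂ) * (u : ℂ) ^ (-s - 1))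
          + (s * (1 / 2 - (N : ℂ))) * (u : ℂ) ^ (-s - 1)))
        = (∫ u in Ioi x, (s * (u : ℂ) ^ (-s) + s * (((1 / 2 - Int.fract u : ℝ) : ℂ) * (u : ℂ) ^ (-s - 1))))
          + ∫ u in Ioi x, (s * (1 / 2 - (N : ℂ))) * (u : ℂ) ^ (-s - 1) :=
      MeasureTheory.integral_add (hintA.add hintB) hintC
    have e2 : (∫ u in Ioi x, (s * (u : ℂ) ^ (-s) + s * (((1 / 2 - Int.fract u : ℝ) : ℂ) * (u : ℂ) ^ (-s - 1))))
        = (∫ u in Ioi x, s * (u : ℂ) ^ (-s))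
          + ∫ u in Ioi x, s * (((1 / 2 - Int.fract u : ℝ) : ℂ) * (u : ℂ) ^ (-s - 1)) :=
      MeasureTheory.integral_add hintA hintB
    rw [e1, e2, MeasureTheory.integral_const_mul, MeasureTheory.integral_const_mul,
      MeasureTheory.integral_const_mul, integral_cpow_Ioi_eq' hs hx, integral_cpow_Ioi_eq hsre hx]
  -- put everything together
  rw [hzeta, ← hsplit, hhead, htail]
  have hxne : (x : ℂ) ≠ 0 := by exact_mod_cast hx.ne'
  have hxc : (x : ℂ) ^ (1 - s) = (x : ℂ) * (x : ℂ) ^ (-s) := by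
    rw [Complex.cpow_sub _ _ hxne, Complex.cpow_one, Complex.cpow_neg]
    field_simp
  have hNc : (N : ℂ) = (x : ℂ) - ((Int.fract x : ℝ) : ℂ) + 1 := by
    have h1 : ((N : ℝ)) = x - Int.fract x + 1 := by
      rw [hN]; push_cast
      have : ((⌊x⌋₊ : ℝ)) = (⌊x⌋ : ℝ) := by
        rw [← Int.natCast_floor_eq_floor hx.le]; push_cast; ring
      rw [this, Int.self_sub_fract x]
    have := congrArg (fun r : ℝ => (r : ℂ)) h1
    push_cast at this ⊢
    exact this
  rw [hxc, hNc]
  field_simp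
  ring

theorem zeta_eulerMaclaurin (s : ℂ) (hs : 0 < s.re) (hs1 : s ≠ 1) (x : ℝ) (hx : 0 < x) :
    riemannZeta s =
      (∑ n ∈ Finset.Icc 1 ⌊x⌋₊, (n : ℂ) ^ (-s)) +
        (x : ℂ) ^ (1 - s) / (s - 1) +
        ((Int.fract x : ℝ) - 1 / 2) * (x : ℂ) ^ (-s) +
        s * ∫ u in Set.Ioi x, ((1 / 2 - Int.fract u : ℝ) : ℂ) * (u : ℂ) ^ (-s - 1) := by
  set U : Set ℂ := {z : ℂ | 0 < z.re} ∩ {(1 : ℂ)}ᶜ with hU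
  have hUo : IsOpen U := (isOpen_lt continuous_const Complex.continuous_re).inter
    isOpen_compl_singleton
  -- preconnectedness of U
  have hpre : IsPreconnected U := by
    set V1 : Set ℂ := {z : ℂ | 0 < z.re} ∩ {z : ℂ | z.re < 1} with hV1d
    set V2 : Set ℂ := {z : ℂ | 1 < z.re} with hV2d
    set V3 : Set ℂ := {z : ℂ | 0 < z.re} ∩ {z : ℂ | 0 < z.im} with hV3d
    set V4 : Set ℂ := {z : ℂ | 0 < z.re} ∩ {z : ℂ | z.im < 0} with hV4d
    have hV1 : IsPreconnected V1 :=
      ((convex_halfSpace_re_gt 0).inter (convex_halfSpace_re_lt 1)).isPreconnected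
    have hV2 : IsPreconnected V2 := (convex_halfSpace_re_gt 1).isPreconnected
    have hV3 : IsPreconnected V3 :=
      ((convex_halfSpace_re_gt 0).inter (convex_halfSpace_im_gt 0)).isPreconnected
    have hV4 : IsPreconnected V4 :=
      ((convex_halfSpace_re_gt 0).inter (convex_halfSpace_im_lt 0)).isPreconnected
    have h13 : IsPreconnected (V1 ∪ V3) := by
      apply IsPreconnected.union ((1:ℂ)/2 + (1/2) * Complex.I) ?_ ?_ hV1 hV3
      · constructor <;> simp [hV1d] <;> norm_num
      · constructor <;> simp [hV3d] <;> norm_num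
    have h132 : IsPreconnected ((V1 ∪ V3) ∪ V2) := by
      apply IsPreconnected.union ((2:ℂ) + Complex.I) ?_ ?_ h13 hV2
      · right; constructor <;> simp [hV3d]
      · simp only [hV2d, Set.mem_setOf_eq]; norm_num
    have h1324 : IsPreconnected (((V1 ∪ V3) ∪ V2) ∪ V4) := by
      apply IsPreconnected.union ((1:ℂ)/2 - (1/2) * Complex.I) ?_ ?_ h132 hV4
      · left; left; constructor <;> simp [hV1d] <;> norm_num
      · constructor <;> simp [hV4d] <;> norm_num
    have hEq : U = ((V1 ∪ V3) ∪ V2) ∪ V4 := by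
      ext z
      simp only [hU, hV1d, hV2d, hV3d, hV4d, Set.mem_inter_iff, Set.mem_union, Set.mem_setOf_eq,
        Set.mem_compl_iff, Set.mem_singleton_iff]
      constructor
      · rintro ⟨hz0, hz1⟩
        rcases lt_trichotomy z.re 1 with h | h | h
        · exact Or.inl (Or.inl (Or.inl ⟨hz0, h⟩))
        · have him : z.im ≠ 0 := by
            intro h0
            apply hz1
            apply Complex.ext
            · simpa using h
            · simpa using h0
          rcases lt_or_gt_of_ne him with h' | h'
          · exact Or.inr ⟨hz0, h'⟩
          · exact Or.inl (Or.inl (Or.inr ⟨hz0, h'⟩))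
        · exact Or.inl (Or.inr h)
      · rintro ((( ⟨h0, h1⟩ | ⟨h0, h1⟩) | h1) | ⟨h0, h1⟩)
        · exact ⟨h0, fun hz => by rw [hz] at h1; simp at h1⟩
        · exact ⟨h0, fun hz => by rw [hz] at h1; simp at h1⟩
        · exact ⟨by linarith, fun hz => by rw [hz] at h1; simp at h1⟩
        · exact ⟨h0, fun hz => by rw [hz] at h1; simp at h1⟩
    rw [hEq]
    exact h1324
  have hxne : (x : ℂ) ≠ 0 := by exact_mod_cast hx.ne'
  set g : ℂ → ℂ := fun w =>
      (∑ n ∈ Finset.Icc 1 ⌊x⌋₊, (n : ℂ) ^ (-w)) +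
        (x : ℂ) ^ (1 - w) / (w - 1) +
        ((Int.fract x : ℝ) - 1 / 2) * (x : ℂ) ^ (-w) +
        w * ∫ u in Set.Ioi x, ((1 / 2 - Int.fract u : ℝ) : ℂ) * (u : ℂ) ^ (-w - 1) with hgdef
  have hζa : AnalyticOnNhd ℂ riemannZeta U := by
    apply DifferentiableOn.analyticOnNhd ?_ hUo
    intro z hz
    exact (differentiableAt_riemannZeta hz.2).differentiableWithinAt
  have hga : AnalyticOnNhd ℂ g U := by
    apply DifferentiableOn.analyticOnNhd ?_ hUo
    intro z hz
    have hz1 : z ≠ 1 := hz.2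
    have hz0 : 0 < z.re := hz.1
    apply DifferentiableAt.differentiableWithinAt
    have d1 : DifferentiableAt ℂ (fun w : ℂ => ∑ n ∈ Finset.Icc 1 ⌊x⌋₊, (n : ℂ) ^ (-w)) z := by
      apply DifferentiableAt.fun_sum
      intro n hn
      have hn0 : (n : ℂ) ≠ 0 := by
        have : 1 ≤ n := (Finset.mem_Icc.1 hn).1
        exact_mod_cast (Nat.pos_of_ne_zero (by omega)).ne'
      exact differentiableAt_id.neg.const_cpow (Or.inl hn0)
    have d2 : DifferentiableAt ℂ (fun w : ℂ => (x : ℂ) ^ (1 - w) / (w - 1)) z := by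
      apply DifferentiableAt.div
      · exact ((differentiableAt_const _).sub differentiableAt_id).const_cpow (Or.inl hxne)
      · exact differentiableAt_id.sub_const 1
      · exact sub_ne_zero.2 hz1
    have d3 : DifferentiableAt ℂ (fun w : ℂ => ((Int.fract x : ℝ) - 1 / 2 : ℂ) * (x : ℂ) ^ (-w)) z :=
      (differentiableAt_id.neg.const_cpow (Or.inl hxne)).const_mul _
    have d4 : DifferentiableAt ℂ (fun w : ℂ =>
        w * ∫ u in Set.Ioi x, ((1 / 2 - Int.fract u : ℝ) : ℂ) * (u : ℂ) ^ (-w - 1)) z :=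
      differentiableAt_id.mul (diff_I hx hz0)
    exact ((d1.add d2).add d3).add d4
  have h2U : (2 : ℂ) ∈ U := by
    constructor
    · simp
    · simp only [Set.mem_compl_iff, Set.mem_singleton_iff]
      norm_num
  have hfg : riemannZeta =ᶠ[nhds 2] g := by
    have hV2o : IsOpen {z : ℂ | 1 < z.re} := isOpen_lt continuous_const Complex.continuous_re
    filter_upwards [hV2o.mem_nhds (by simp : (2:ℂ) ∈ {z : ℂ | 1 < z.re})] with z hz
    exact key1 z hz x hx
  have hsU : s ∈ U := ⟨hs, fun h => hs1 h⟩
  exact hζa.eqOn_of_preconnected_of_eventuallyEq hga hpre h2U hfg hsU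

end
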